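/- Let V be a nonempty topological space, W a topological space, and G a nontrivial path-connected topological group. Let f : C(V,G) → C(W,G) be a map and suppose there exist maps φ : W → V, γ : W → Aut(G) (abstract group automorphisms of G), and ψ : C(V,G) × W → G such that for every w ∈ W the map x ↦ ψ(x,w) is a group homomorphism with values in the center Z(G), ψ(x,w) = 1 whenever the coset [x] of x modulo the null-homotopic maps contains a non-surjective map, and f(x)(w) = γ(w)(ψ(x,w)·x(φ(w))) for all x ∈ C(V,G) and w ∈ W. Then f is a group homomorphism and: (i) for every w ∈ W there is a null-homotopic x ∈ C(V,G) with f(x)(w) ≠ 1; (ii) for every w ∈ W the map G → G, g ↦ f(c_g)(w), is surjective, where c_g is the constant map with value g; (iii) for every x ∈ C(V,G) with x(v) ≠ 1 for all v ∈ V, we have f(x)(w) ≠ 1 for all w ∈ W. -/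

import Mathlib

/-!
Constant maps and nowhere-`1` maps are not surjective, so their weight `ψ` is trivial and on them
`f x w = γ w (x (φ w))`; since `γ w` is injective and surjective this gives (i)–(iii), with a
non-identity constant (null-homotopic because `G` is path-connected) as the witness in (i).
Multiplicativity holds because the central weight commutes past `x (φ w)`.
-/

open ContinuousMap

namespace ContinuousMap

variable {V G : Type*} [TopologicalSpace V] [TopologicalSpace G]

theorem not_surjective_const [Nontrivial G] (g : G) : ¬Function.Surjective (const V g) :=
  fun hs ↦
    let ⟨h, hh⟩ := exists_ne g
    let ⟨_, hv⟩ := hs h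
    hh hv.symm

theorem const_homotopic_one [One G] [PathConnectedSpace G] (g : G) : (const V g).Homotopic 1 :=
  ⟨(PathConnectedSpace.somePath g 1).toHomotopyConst⟩

end ContinuousMap

section WeightedComposition

variable {V W G : Type*} [TopologicalSpace V] [TopologicalSpace W] [TopologicalSpace G] [Group G]
  {f : C(V, G) → C(W, G)} {φ : W → V} {γ : W → MulAut G}
  {ψ : C(V, G) → W → G}

theorem map_mul_of_eq_weighted_comp [IsTopologicalGroup G] (hform : ∀ x w, f x w = γ w (ψ x w * x (φ w)))
    (hmul : ∀ w x y, ψ (x * y) w = ψ x w * ψ y w) (hcen : ∀ w x, ψ x w ∈ Subgroup.center G)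
    (x y : C(V, G)) : f (x * y) = f x * f y := by
  ext w
  have hcomm : Commute (ψ y w) (x (φ w)) :=
    (Subgroup.mem_center_iff.mp (hcen w y) (x (φ w))).symm
  simp only [ContinuousMap.mul_apply, hform, hmul, ← map_mul, hcomm.mul_mul_mul_comm]

theorem apply_eq_of_weight_eq_one (hform : ∀ x w, f x w = γ w (ψ x w * x (φ w)))
    {x : C(V, G)} {w : W} (hψ : ψ x w = 1) : f x w = γ w (x (φ w)) := by
  rw [hform, hψ, one_mul]

end WeightedComposition

theorem weighted_composition_properties_general {V W G : Type*} [TopologicalSpace V]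
    [TopologicalSpace W] [TopologicalSpace G] [Group G] [IsTopologicalGroup G]
    [PathConnectedSpace G] [Nontrivial G]
    (f : C(V, G) → C(W, G))
    (hf : ∃ (φ : W → V) (γ : W → MulAut G) (ψ : C(V, G) → W → G),
      (∀ w : W, ∀ x y : C(V, G), ψ (x * y) w = ψ x w * ψ y w) ∧
      (∀ (w : W) (x : C(V, G)), ψ x w ∈ Subgroup.center G) ∧
      (∀ (w : W) (x : C(V, G)),
        (∃ x₀ : C(V, G), (x₀ * x⁻¹).Homotopic 1 ∧ ¬Function.Surjective ⇑x₀) → ψ x w = 1) ∧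
      (∀ (x : C(V, G)) (w : W), f x w = γ w (ψ x w * x (φ w)))) :
    (∀ x y : C(V, G), f (x * y) = f x * f y) ∧
    (∀ w : W, ∃ x : C(V, G), x.Homotopic 1 ∧ f x w ≠ 1) ∧
    (∀ w : W, Function.Surjective (fun g : G => f (ContinuousMap.const V g) w)) ∧
    (∀ x : C(V, G), (∀ v : V, x v ≠ 1) → ∀ w : W, f x w ≠ 1) := by
  obtain ⟨φ, γ, ψ, hmul, hcen, hvan, hform⟩ := hf
  have hψ : ∀ w (x : C(V, G)), ¬Function.Surjective ⇑x → ψ x w = 1 :=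
    fun w x hx ↦ hvan w x ⟨x, by rw [mul_inv_cancel], hx⟩
  have hconst : ∀ g w, f (const V g) w = γ w g :=
    fun g w ↦ apply_eq_of_weight_eq_one hform (hψ w _ (not_surjective_const g))
  refine ⟨map_mul_of_eq_weighted_comp hform hmul hcen, fun w ↦ ?_,
    fun w g ↦ ⟨(γ w).symm g, by simp [hconst]⟩, fun x hx w ↦ ?_⟩
  · obtain ⟨g, hg⟩ := exists_ne (1 : G)
    exact ⟨const V g, const_homotopic_one g, by simpa [hconst] using hg⟩
  · have hx_ns : ¬Function.Surjective ⇑x := fun hs ↦ (hs 1).elim hx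
    simpa [apply_eq_of_weight_eq_one hform (hψ w x hx_ns)] using hx (φ w)

/-- Conversely, if `f : C(V,G) → C(W,G)` has the form
`f x w = γ(w) (ψ(x,w) * x (φ w))` with `γ(w) ∈ Aut(G)` and `ψ(·,w)` a central-valued
homomorphism vanishing on cosets containing a non-surjective map, then `f` is a group
homomorphism satisfying (i), (ii), (iii). -/
theorem weighted_composition_properties {V W G : Type*} [TopologicalSpace V] [Nonempty V]
    [TopologicalSpace W] [TopologicalSpace G] [Group G] [IsTopologicalGroup G]
    [PathConnectedSpace G] [Nontrivial G]
    (f : C(V, G) → C(W, G))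
    (hf : ∃ (φ : W → V) (γ : W → MulAut G) (ψ : C(V, G) → W → G),
      (∀ w : W, ∀ x y : C(V, G), ψ (x * y) w = ψ x w * ψ y w) ∧
      (∀ (w : W) (x : C(V, G)), ψ x w ∈ Subgroup.center G) ∧
      (∀ (w : W) (x : C(V, G)),
        (∃ x₀ : C(V, G), (x₀ * x⁻¹).Homotopic 1 ∧ ¬Function.Surjective ⇑x₀) → ψ x w = 1) ∧
      (∀ (x : C(V, G)) (w : W), f x w = γ w (ψ x w * x (φ w)))) :
    (∀ x y : C(V, G), f (x * y) = f x * f y) ∧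
    (∀ w : W, ∃ x : C(V, G), x.Homotopic 1 ∧ f x w ≠ 1) ∧
    (∀ w : W, Function.Surjective (fun g : G => f (ContinuousMap.const V g) w)) ∧
    (∀ x : C(V, G), (∀ v : V, x v ≠ 1) → ∀ w : W, f x w ≠ 1) :=
  weighted_composition_properties_general f hf
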